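/- arXiv:2212.09049 — 8 statements merged into one kernel-verified Lean document; each statement's English description precedes it below -/
import Mathlib

section
/- Let N ≥ 1, z : Fin N → ℂ and h ∈ ℂ. There exists a phase vector φ : Fin N → ℝ with (∑_i z_i · exp(φ_i · I)) + h = 0 if and only if sInf (Set.range f) ≤ |h| ≤ sSup (Set.range f), where f(φ) = |∑_i z_i · exp(φ_i · I)|. (Paper's Lemma 2: a perfect-covertness phase configuration exists iff |h_{a,w}| lies between the minimum and maximum over all phases of the modulus of the reflected sum.) -/
open Complex Filter

/-!
Write `S(φ) = ∑ zᵢ e^{iφᵢ}`. Through `φ ↦ (e^{iφᵢ})ᵢ`, `S` factors over the torus `(S¹)ᴺ`, which is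
compact and connected, so the range of `‖S‖` is the interval `[min ‖S‖, max ‖S‖]`. Multiplying all
phasors by a common `c ∈ S¹` multiplies the sum by `c`, so every complex number whose modulus is
attained by `‖S‖` (in particular `-h`) is attained by `S` itself.
-/

namespace PhasedSum

variable {ι : Type*}

lemma surjective_circleExp_pi : Function.Surjective fun (φ : ι → ℝ) i => Circle.exp (φ i) :=
  Function.Surjective.piMap fun _ => Circle.exp_surjective

variable [Fintype ι]

def circleSum (z : ι → ℂ) (u : ι → Circle) : ℂ := ∑ i, z i * u i

lemma sum_mul_exp_eq_circleSum (z : ι → ℂ) (φ : ι → ℝ) :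
    ∑ i, z i * Complex.exp ((φ i : ℂ) * Complex.I) = circleSum z (fun i => Circle.exp (φ i)) := by
  simp only [circleSum, Circle.coe_exp]

@[fun_prop]
lemma continuous_circleSum (z : ι → ℂ) : Continuous (circleSum z) := by
  unfold circleSum; fun_prop

lemma circleSum_mul (z : ι → ℂ) (c : Circle) (u : ι → Circle) :
    circleSum z (fun i => c * u i) = c * circleSum z u := by
  simp only [circleSum, Circle.coe_mul, Finset.mul_sum]
  exact Finset.sum_congr rfl fun i _ => by ring

lemma exists_circle_mul_eq {x w : ℂ} (hxw : ‖x‖ = ‖w‖) : ∃ c : Circle, c * x = w := by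
  rcases eq_or_ne x 0 with rfl | hx
  · exact ⟨1, by simpa [eq_comm] using hxw⟩
  · refine ⟨⟨w / x, mem_sphere_zero_iff_norm.2 ?_⟩, div_mul_cancel₀ w hx⟩
    rw [norm_div, hxw, div_self (hxw ▸ norm_ne_zero_iff.2 hx)]

lemma mem_range_circleSum_iff (z : ι → ℂ) (w : ℂ) :
    w ∈ Set.range (circleSum z) ↔ ‖w‖ ∈ Set.range (‖circleSum z ·‖) := by
  refine ⟨fun ⟨u, hu⟩ => ⟨u, congrArg norm hu⟩, fun ⟨u, hu⟩ => ?_⟩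
  obtain ⟨c, hc⟩ := exists_circle_mul_eq hu
  exact ⟨fun i => c * u i, by rw [circleSum_mul, hc]⟩

lemma range_norm_circleSum_eq_Icc (z : ι → ℂ) :
    Set.range (‖circleSum z ·‖) =
      Set.Icc (sInf (Set.range (‖circleSum z ·‖))) (sSup (Set.range (‖circleSum z ·‖))) :=
  eq_Icc_of_connected_compact (isConnected_range (by fun_prop)) (isCompact_range (by fun_prop))

end PhasedSum

open PhasedSum in
theorem perfect_covertness_iff_general (N : ℕ) (z : Fin N → ℂ) (h : ℂ)
    (f : (Fin N → ℝ) → ℝ)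
    (hf : ∀ φ : Fin N → ℝ, f φ = ‖∑ i, z i * Complex.exp ((φ i : ℂ) * Complex.I)‖) :
    (∃ φ : Fin N → ℝ, (∑ i, z i * Complex.exp ((φ i : ℂ) * Complex.I)) + h = 0) ↔
      sInf (Set.range f) ≤ ‖h‖ ∧ ‖h‖ ≤ sSup (Set.range f) := by
  have hrange : Set.range f = Set.range (‖circleSum z ·‖) := by
    rw [← (surjective_circleExp_pi (ι := Fin N)).range_comp]
    exact congrArg Set.range (funext fun φ => by rw [hf, sum_mul_exp_eq_circleSum]; rfl)
  calc (∃ φ : Fin N → ℝ, (∑ i, z i * Complex.exp ((φ i : ℂ) * Complex.I)) + h = 0)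
      ↔ -h ∈ Set.range (circleSum z) := by
        simp only [sum_mul_exp_eq_circleSum, add_eq_zero_iff_eq_neg]
        exact (surjective_circleExp_pi (ι := Fin N)).exists (p := (circleSum z · = -h)) |>.symm
    _ ↔ ‖h‖ ∈ Set.range f := by rw [mem_range_circleSum_iff, norm_neg, hrange]
    _ ↔ sInf (Set.range f) ≤ ‖h‖ ∧ ‖h‖ ≤ sSup (Set.range f) := by
        rw [hrange, ← Set.mem_Icc, ← range_norm_circleSum_eq_Icc]

/-- Paper's Lemma 2: a perfect-covertness phase configuration exists iff `|h|` lies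
between the minimum and maximum over all phases of the modulus of the reflected sum. -/
theorem perfect_covertness_iff (N : ℕ) (hN : 1 ≤ N) (z : Fin N → ℂ) (h : ℂ)
    (f : (Fin N → ℝ) → ℝ)
    (hf : ∀ φ : Fin N → ℝ, f φ = ‖∑ i, z i * Complex.exp ((φ i : ℂ) * Complex.I)‖) :
    (∃ φ : Fin N → ℝ, (∑ i, z i * Complex.exp ((φ i : ℂ) * Complex.I)) + h = 0) ↔
      sInf (Set.range f) ≤ ‖h‖ ∧ ‖h‖ ≤ sSup (Set.range f) :=
  perfect_covertness_iff_general N z h f hf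
end

section
/- Let z₁, z₂ ∈ ℂ with z₁ ≠ 0 and z₂ ≠ 0, and let c ≥ 0 satisfy ||z₁| − |z₂|| ≤ c ≤ |z₁| + |z₂|. Set r₁ = |z₁|, r₂ = |z₂|, and A = arccos((c² − (r₁² + r₂²)) / (2·r₁·r₂)). Then both phases φ⁺ = arg z₂ − arg z₁ + A and φ⁻ = arg z₂ − arg z₁ − A satisfy |z₁ · exp(φ · I) + z₂| = c. (Paper's Lemma 3: the two explicit phase solutions for a 2-element IRS.) -/
open Complex Real

/-!
Rotating the whole configuration by `exp (-arg z₂ * I)` turns `z₁ * exp (φ * I) + z₂` with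
`φ = arg z₂ - arg z₁ + a` into `‖z₁‖ * exp (a * I) + ‖z₂‖`, whose squared norm is
`‖z₁‖² + ‖z₂‖² + 2‖z₁‖‖z₂‖ cos a` by the law of cosines. The triangle inequalities on `c` put
`c² - (‖z₁‖² + ‖z₂‖²)` within `2‖z₁‖‖z₂‖` of zero, so `a = ±A` makes this squared norm `c²`.
-/
theorem abs_sq_sub_sq_add_sq_le {r₁ r₂ c : ℝ} (hlow : |r₁ - r₂| ≤ c) (hhigh : c ≤ r₁ + r₂) :
    |c ^ 2 - (r₁ ^ 2 + r₂ ^ 2)| ≤ 2 * r₁ * r₂ := by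
  have hc : 0 ≤ c := (abs_nonneg _).trans hlow
  have hsub : (r₁ - r₂) ^ 2 ≤ c ^ 2 := by
    simpa only [sq_abs] using pow_le_pow_left₀ (abs_nonneg _) hlow 2
  have hadd : c ^ 2 ≤ (r₁ + r₂) ^ 2 := pow_le_pow_left₀ hc hhigh 2
  rw [abs_le]
  constructor <;> nlinarith

theorem mul_cos_arccos_div {y d : ℝ} (h : |y| ≤ d) : d * Real.cos (arccos (y / d)) = y := by
  rcases (abs_nonneg y).trans h |>.eq_or_lt with hd | hd
  · subst hd
    simpa using (abs_nonpos_iff.mp h).symm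
  · obtain ⟨hlo, hhi⟩ := abs_le.mp h
    rw [cos_arccos ((le_div_iff₀ hd).mpr (by linarith)) ((div_le_one hd).mpr hhi)]
    field_simp

theorem norm_ofReal_mul_exp_add_ofReal_sq (r₁ r₂ a : ℝ) :
    ‖(r₁ : ℂ) * exp (a * I) + r₂‖ ^ 2 = r₁ ^ 2 + r₂ ^ 2 + 2 * r₁ * r₂ * Real.cos a := by
  rw [← normSq_eq_norm_sq, normSq_apply]
  simp only [add_re, add_im, mul_re, mul_im, ofReal_re, ofReal_im, exp_ofReal_mul_I_re,
    exp_ofReal_mul_I_im, zero_mul, sub_zero, add_zero]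
  nlinarith [Real.sin_sq_add_cos_sq a]

theorem mul_exp_arg_sub_add_eq (z₁ z₂ : ℂ) (a : ℝ) :
    z₁ * exp (↑(arg z₂ - arg z₁ + a) * I) + z₂
      = exp (arg z₂ * I) * ((‖z₁‖ : ℂ) * exp (a * I) + ‖z₂‖) := by
  have h₁ := norm_mul_exp_arg_mul_I z₁
  have h₂ := norm_mul_exp_arg_mul_I z₂
  generalize arg z₁ = t₁ at *
  generalize arg z₂ = t₂ at *
  conv_lhs => rw [← h₁, ← h₂]
  rw [mul_assoc, ← Complex.exp_add, mul_add, ← mul_assoc, mul_comm (cexp _), mul_assoc,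
    ← Complex.exp_add, mul_comm (cexp _)]
  push_cast
  ring_nf

theorem norm_mul_exp_arg_sub_add_sq (z₁ z₂ : ℂ) (a : ℝ) :
    ‖z₁ * exp (↑(arg z₂ - arg z₁ + a) * I) + z₂‖ ^ 2
      = ‖z₁‖ ^ 2 + ‖z₂‖ ^ 2 + 2 * ‖z₁‖ * ‖z₂‖ * Real.cos a := by
  rw [mul_exp_arg_sub_add_eq, norm_mul, norm_exp_ofReal_mul_I, one_mul,
    norm_ofReal_mul_exp_add_ofReal_sq]

theorem two_element_phase_solutions_general (z₁ z₂ : ℂ)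
    (c : ℝ)
    (hlow : |‖z₁‖ - ‖z₂‖| ≤ c)
    (hhigh : c ≤ ‖z₁‖ + ‖z₂‖) :
    ‖(z₁ * Complex.exp
        ((↑(Complex.arg z₂ - Complex.arg z₁ +
            Real.arccos ((c ^ 2 - ((‖z₁‖) ^ 2 + (‖z₂‖) ^ 2)) /
              (2 * ‖z₁‖ * ‖z₂‖))) : ℂ) * Complex.I) + z₂)‖ = c ∧
    ‖(z₁ * Complex.exp
        ((↑(Complex.arg z₂ - Complex.arg z₁ -
            Real.arccos ((c ^ 2 - ((‖z₁‖) ^ 2 + (‖z₂‖) ^ 2)) /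
              (2 * ‖z₁‖ * ‖z₂‖))) : ℂ) * Complex.I) + z₂)‖ = c := by
  set A := arccos ((c ^ 2 - (‖z₁‖ ^ 2 + ‖z₂‖ ^ 2)) / (2 * ‖z₁‖ * ‖z₂‖))
  have hc : 0 ≤ c := (abs_nonneg _).trans hlow
  have hA : 2 * ‖z₁‖ * ‖z₂‖ * Real.cos A = c ^ 2 - (‖z₁‖ ^ 2 + ‖z₂‖ ^ 2) :=
    mul_cos_arccos_div (abs_sq_sub_sq_add_sq_le hlow hhigh)
  have hphase : ∀ a, Real.cos a = Real.cos A →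
      ‖z₁ * exp (↑(arg z₂ - arg z₁ + a) * I) + z₂‖ = c :=
    fun a ha ↦ (sq_eq_sq₀ (norm_nonneg _) hc).mp <| by
      rw [norm_mul_exp_arg_sub_add_sq, ha, hA]
      ring
  rw [sub_eq_add_neg]
  exact ⟨hphase A rfl, hphase (-A) (Real.cos_neg A)⟩

/-- Paper's Lemma 3: the two explicit phase solutions for a 2-element IRS. -/
theorem two_element_phase_solutions (z₁ z₂ : ℂ) (hz₁ : z₁ ≠ 0) (hz₂ : z₂ ≠ 0)
    (c : ℝ) (hc : 0 ≤ c)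
    (hlow : |‖z₁‖ - ‖z₂‖| ≤ c)
    (hhigh : c ≤ ‖z₁‖ + ‖z₂‖) :
    ‖(z₁ * Complex.exp
        ((↑(Complex.arg z₂ - Complex.arg z₁ +
            Real.arccos ((c ^ 2 - ((‖z₁‖) ^ 2 + (‖z₂‖) ^ 2)) /
              (2 * ‖z₁‖ * ‖z₂‖))) : ℂ) * Complex.I) + z₂)‖ = c ∧
    ‖(z₁ * Complex.exp
        ((↑(Complex.arg z₂ - Complex.arg z₁ -
            Real.arccos ((c ^ 2 - ((‖z₁‖) ^ 2 + (‖z₂‖) ^ 2)) /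
              (2 * ‖z₁‖ * ‖z₂‖))) : ℂ) * Complex.I) + z₂)‖ = c :=
  two_element_phase_solutions_general z₁ z₂ c hlow hhigh
end

section
/- Let r ∈ ℝ and c ∈ ℂ. Then for every t ∈ ℝ, the function t ↦ |r · exp(t · I) + c|² has derivative −2·r·|c|·sin(t − arg c) at t; that is, HasDerivAt (fun t => |r · exp(t·I) + c|²) (−2·r·|c|·sin(t − arg c)) t. (The k-th partial derivative formula for the received power derived in Appendix C.) -/
/-! By the law of cosines, `‖r e^{it} + c‖² = r² + ‖c‖² + 2 r ‖c‖ cos (t - arg c)`,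
which is differentiated term by term. -/

open Complex Real
open scoped ComplexConjugate

theorem re_ofReal_mul_exp_mul_conj (r t : ℝ) (c : ℂ) :
    ((r : ℂ) * exp (t * I) * conj c).re = r * ‖c‖ * Real.cos (t - arg c) := by
  conv_lhs => rw [← norm_mul_exp_arg_mul_I c]
  have hphase : (r : ℂ) * exp (t * I) * conj (‖c‖ * exp (arg c * I))
      = ((r * ‖c‖ : ℝ) : ℂ) * exp (((t - arg c : ℝ) : ℂ) * I) := by
    rw [map_mul, ← exp_conj]
    simp only [map_mul, conj_ofReal, conj_I]
    push_cast
    rw [mul_mul_mul_comm, ← Complex.exp_add]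
    ring_nf
  rw [hphase, re_ofReal_mul, exp_ofReal_mul_I_re]

theorem norm_ofReal_mul_exp_add_sq (r t : ℝ) (c : ℂ) :
    ‖(r : ℂ) * exp (t * I) + c‖ ^ 2 = r ^ 2 + ‖c‖ ^ 2 + 2 * r * ‖c‖ * Real.cos (t - arg c) := by
  rw [Complex.sq_norm, normSq_add, ← Complex.sq_norm, ← Complex.sq_norm,
    re_ofReal_mul_exp_mul_conj, norm_mul, norm_exp_ofReal_mul_I, norm_real, Real.norm_eq_abs,
    mul_one, sq_abs]
  ring

/-- The k-th partial derivative formula for the received power derived in Appendix C. -/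
theorem hasDerivAt_abs_sq_phased (r : ℝ) (c : ℂ) (t : ℝ) :
    HasDerivAt (fun t : ℝ => ‖(r : ℂ) * Complex.exp ((t : ℂ) * Complex.I) + c‖ ^ 2)
      (-2 * r * ‖c‖ * Real.sin (t - Complex.arg c)) t := by
  have hcos : HasDerivAt (fun s : ℝ => Real.cos (s - arg c)) (-Real.sin (t - arg c)) t := by
    simpa using ((hasDerivAt_id t).sub_const (arg c)).cos
  have hlaw := (hcos.const_mul (2 * r * ‖c‖)).const_add (r ^ 2 + ‖c‖ ^ 2)
  simp only [← norm_ofReal_mul_exp_add_sq] at hlaw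
  exact hlaw.congr_deriv (by ring)
end

section
/- Let N ∈ ℕ and r : Fin N → ℝ with r_k > 0 for all k, and define PWR : EuclideanSpace ℝ (Fin N) → ℝ by PWR(φ) = |∑_i r_i · exp(φ_i · I)|². Then φ is a critical point of PWR (i.e. fderiv ℝ PWR φ = 0) if and only if for every k ∈ Fin N, either c_k(φ) = 0 or sin(φ_k − arg (c_k(φ))) = 0, where c_k(φ) = ∑_{i ≠ k} r_i · exp(φ_i · I). Equivalently, when c_k(φ) ≠ 0, φ_k = arg(c_k(φ)) + n·π for some integer n. (Paper's Lemma 5: each phase points along or opposite to the sum of all other vectors.) -/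
/-!
Write `z = ∑ rᵢ e^{iφᵢ}` and `c_k = z - r_k e^{iφ_k}`. The `k`-th partial derivative of `|z|²` is
`2 ⟪z, i r_k e^{iφ_k}⟫`; the summand `r_k e^{iφ_k}` of `z` is orthogonal to `i r_k e^{iφ_k}`, so only
`c_k` contributes, giving `-2 r_k |c_k| sin (φ_k - arg c_k)`. As `r_k > 0`, this vanishes exactly
when `c_k = 0` or the sine does.
-/

open Complex Real ComplexConjugate

variable {ι : Type*} [Fintype ι]

theorem EuclideanSpace.clm_eq_zero_iff_forall_single [DecidableEq ι] {𝕜 F : Type*} [RCLike 𝕜]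
    [AddCommGroup F] [Module 𝕜 F] [TopologicalSpace F] (L : EuclideanSpace 𝕜 ι →L[𝕜] F) :
    L = 0 ↔ ∀ k, L (EuclideanSpace.single k 1) = 0 := by
  refine ⟨by rintro rfl; simp, fun h => ?_⟩
  refine ContinuousLinearMap.coe_injective ((EuclideanSpace.basisFun ι 𝕜).toBasis.ext fun k => ?_)
  simpa using h k

theorem hasDerivAt_mul_exp_ofReal_mul_I (a : ℂ) (t : ℝ) :
    HasDerivAt (fun s : ℝ => a * exp (s * I)) (a * exp (t * I) * I) t := by
  simpa [mul_assoc] using (((hasDerivAt_id t).ofReal_comp.mul_const I).cexp).const_mul a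

theorem hasFDerivAt_sum_mul_exp_mul_I (a : ι → ℂ) (φ : EuclideanSpace ℝ ι) :
    HasFDerivAt (fun ψ : EuclideanSpace ℝ ι => ∑ i, a i * exp (ψ i * I))
      (∑ i, (ContinuousLinearMap.smulRight (1 : ℝ →L[ℝ] ℝ) (a i * exp (φ i * I) * I)).comp
        (EuclideanSpace.proj i)) φ :=
  HasFDerivAt.fun_sum fun i _ =>
    (hasDerivAt_mul_exp_ofReal_mul_I (a i) (φ i)).hasFDerivAt.comp
      (g := fun s : ℝ => a i * exp (s * I)) φ (EuclideanSpace.proj (𝕜 := ℝ) i).hasFDerivAt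

theorem fderiv_norm_sum_mul_exp_mul_I_sq_apply_single [DecidableEq ι] (a : ι → ℂ)
    (φ : EuclideanSpace ℝ ι) (k : ι) :
    fderiv ℝ (fun ψ : EuclideanSpace ℝ ι => ‖∑ i, a i * exp (ψ i * I)‖ ^ 2) φ
        (EuclideanSpace.single k 1) =
      2 * inner ℝ (∑ i, a i * exp (φ i * I)) (a k * exp (φ k * I) * I) := by
  rw [(hasFDerivAt_sum_mul_exp_mul_I a φ).norm_sq.fderiv]
  simp only [smul_apply, ContinuousLinearMap.comp_apply, sum_apply, PiLp.proj_apply,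
    PiLp.single_apply, ContinuousLinearMap.smulRight_apply, one_apply_eq_self, ite_smul,
    one_smul, zero_smul, Finset.sum_ite_eq', Finset.mem_univ, if_true, coe_innerSL_apply,
    nsmul_eq_mul, Nat.cast_ofNat]

theorem inner_add_mul_I (w c : ℂ) : inner ℝ (w + c) (w * I) = (c * conj w).im := by
  simp only [Complex.inner, map_add, add_re, add_im, mul_re, mul_im, conj_re, conj_im, I_re, I_im,
    mul_zero, mul_one, mul_neg, neg_mul, zero_sub, add_zero]
  ring

theorem im_mul_conj_ofReal_mul_exp (c : ℂ) (r θ : ℝ) :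
    (c * conj (r * exp (θ * I))).im = -(r * ‖c‖ * Real.sin (θ - arg c)) := by
  simp only [mul_im, mul_re, map_mul, conj_ofReal, conj_re, conj_im, ofReal_re, ofReal_im,
    exp_ofReal_mul_I_re, exp_ofReal_mul_I_im, Real.sin_sub, ← norm_mul_cos_arg c,
    ← norm_mul_sin_arg c]
  ring

/-- Paper's Lemma 5: `φ` is a critical point of `PWR` iff each phase points along or opposite
to the sum of all other vectors. -/
theorem critical_point_iff_aligned (N : ℕ) (r : Fin N → ℝ) (hr : ∀ k, 0 < r k)
    (PWR : EuclideanSpace ℝ (Fin N) → ℝ)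
    (hPWR : ∀ φ : EuclideanSpace ℝ (Fin N),
      PWR φ = (‖∑ i, (r i : ℂ) * Complex.exp ((φ i : ℂ) * Complex.I)‖) ^ 2)
    (φ : EuclideanSpace ℝ (Fin N)) :
    fderiv ℝ PWR φ = 0 ↔
      ∀ k : Fin N,
        (∑ i ∈ Finset.univ.erase k, (r i : ℂ) * Complex.exp ((φ i : ℂ) * Complex.I)) = 0 ∨
        Real.sin (φ k -
          Complex.arg (∑ i ∈ Finset.univ.erase k,
            (r i : ℂ) * Complex.exp ((φ i : ℂ) * Complex.I))) = 0 := by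
  rw [EuclideanSpace.clm_eq_zero_iff_forall_single, funext hPWR]
  refine forall_congr' fun k => ?_
  rw [fderiv_norm_sum_mul_exp_mul_I_sq_apply_single, ← Finset.add_sum_erase _ _ (Finset.mem_univ k),
    inner_add_mul_I, im_mul_conj_ofReal_mul_exp]
  simp [(hr k).ne']
end

section
/- Let N ∈ ℕ and r : Fin N → ℝ with r_i > 0 for all i, and define PWR : EuclideanSpace ℝ (Fin N) → ℝ by PWR(φ) = |∑_i r_i · exp(φ_i · I)|². If φ is a critical point of PWR (fderiv ℝ PWR φ = 0) and PWR(φ) is strictly greater than the infimum of PWR over EuclideanSpace ℝ (Fin N), then all the vectors r_i · exp(φ_i · I) are aligned on one axis: for all i, l ∈ Fin N there exists k ∈ ℤ with φ_i = φ_l + k·π (equivalently, sin(φ_i − φ_l) = 0 for all i, l). (Paper's Lemma 6.) -/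
/-!
Write `PWR = ‖S‖²` with `S(ψ) = ∑ rⱼ e^{iψⱼ}`. The partial derivative of `PWR` in `ψₘ` is
`-2 rₘ Im(conj S · e^{iψₘ})`, so at a critical point every `e^{iφₘ}` is a real multiple of `S φ`.
Since `PWR φ` exceeds the infimum, which is `≥ 0`, `S φ ≠ 0`, hence all `e^{iφₘ}` lie on one line.
-/

open Complex Real ComplexConjugate

section

variable {ι : Type*} [Fintype ι] (r : ι → ℝ)

noncomputable def phasorSum (ψ : EuclideanSpace ℝ ι) : ℂ :=
  ∑ i, (r i : ℂ) * exp ((ψ i : ℂ) * I)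

theorem hasFDerivAt_phasorSum (φ : EuclideanSpace ℝ ι) :
    HasFDerivAt (phasorSum r)
      (∑ i, ((r i : ℂ) * I * exp ((φ i : ℂ) * I)) • (ofRealCLM.comp (EuclideanSpace.proj i))) φ := by
  refine HasFDerivAt.fun_sum fun i _ => ?_
  refine ((((ofRealCLM.comp (EuclideanSpace.proj i)).hasFDerivAt).mul_const I).cexp.const_mul
    (r i : ℂ)).congr_fderiv ?_
  ext v
  simp only [ContinuousLinearMap.comp_apply, PiLp.proj_apply, ofRealCLM_apply,
    smul_apply, smul_eq_mul]
  ring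

theorem fderiv_norm_sq_phasorSum_single [DecidableEq ι] (φ : EuclideanSpace ℝ ι) (m : ι) :
    fderiv ℝ (fun ψ => ‖phasorSum r ψ‖ ^ 2) φ (EuclideanSpace.single m 1) =
      -2 * r m * (conj (phasorSum r φ) * exp ((φ m : ℂ) * I)).im := by
  rw [(hasFDerivAt_phasorSum r φ).norm_sq.fderiv]
  simp only [smul_apply, ContinuousLinearMap.comp_apply,
    sum_apply, PiLp.proj_apply, PiLp.single_apply, ofRealCLM_apply, smul_eq_mul,
    map_sum, coe_innerSL_apply, Complex.inner, mul_re, ofReal_re, I_re, mul_zero, ofReal_im, I_im,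
    mul_one, sub_self, exp_ofReal_mul_I_re, zero_mul, mul_im, add_zero, exp_ofReal_mul_I_im,
    zero_sub, mul_ite, zero_add, sub_zero, conj_re, ite_mul, neg_mul, conj_im, mul_neg,
    sub_neg_eq_add, Finset.sum_add_distrib, Finset.sum_ite_eq', Finset.mem_univ, ↓reduceIte,
    smul_add, smul_neg, nsmul_eq_mul, Nat.cast_ofNat]
  ring

end

theorem sin_sub_eq_zero_of_im_conj_mul_exp {z : ℂ} (hz : z ≠ 0) {a b : ℝ}
    (ha : (conj z * exp (a * I)).im = 0) (hb : (conj z * exp (b * I)).im = 0) :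
    Real.sin (a - b) = 0 := by
  simp only [mul_im, conj_re, exp_ofReal_mul_I_im, conj_im, exp_ofReal_mul_I_re, neg_mul] at ha hb
  have : normSq z * Real.sin (a - b) = 0 := by
    rw [normSq_apply, Real.sin_sub]
    linear_combination (z.re * Real.cos b + z.im * Real.sin b) * ha
      - (z.re * Real.cos a + z.im * Real.sin a) * hb
  simpa [hz] using this

/-- Paper's Lemma 6: at a critical point of `PWR` that is not a global minimum,
all the vectors `r i · exp(φ i · I)` are aligned on one axis. -/
theorem critical_point_not_min_aligned (N : ℕ) (r : Fin N → ℝ) (hr : ∀ i, 0 < r i)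
    (PWR : EuclideanSpace ℝ (Fin N) → ℝ)
    (hPWR : ∀ φ : EuclideanSpace ℝ (Fin N),
      PWR φ = ‖∑ i, (r i : ℂ) * Complex.exp ((φ i : ℂ) * Complex.I)‖ ^ 2)
    (φ : EuclideanSpace ℝ (Fin N))
    (hcrit : fderiv ℝ PWR φ = 0)
    (hmin : (⨅ ψ : EuclideanSpace ℝ (Fin N), PWR ψ) < PWR φ) :
    ∀ i l : Fin N, ∃ k : ℤ, φ i = φ l + k * Real.pi := by
  obtain rfl : PWR = fun ψ => ‖phasorSum r ψ‖ ^ 2 := funext hPWR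
  have hS : phasorSum r φ ≠ 0 := by
    intro h0
    have : (0 : ℝ) ≤ ⨅ ψ, ‖phasorSum r ψ‖ ^ 2 := Real.iInf_nonneg fun ψ => by positivity
    simp only [h0, norm_zero] at hmin
    linarith
  have hphase (m : Fin N) : (conj (phasorSum r φ) * exp ((φ m : ℂ) * I)).im = 0 := by
    have := fderiv_norm_sq_phasorSum_single r φ m
    rw [hcrit, zero_apply] at this
    simpa [(hr m).ne'] using this.symm
  intro i l
  obtain ⟨k, hk⟩ :=
    Real.sin_eq_zero_iff.mp (sin_sub_eq_zero_of_im_conj_mul_exp hS (hphase i) (hphase l))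
  exact ⟨k, by linarith⟩
end

section
/- Let N ∈ ℕ and r : Fin N → ℝ with r_i > 0 for all i, and define PWR : EuclideanSpace ℝ (Fin N) → ℝ by PWR(φ) = |∑_i r_i · exp(φ_i · I)|². Then every critical point φ of PWR (fderiv ℝ PWR φ = 0) either achieves the global minimum, PWR(φ) = ⨅_ψ PWR(ψ), or is a strict saddle point: there exists v ∈ EuclideanSpace ℝ (Fin N) with iteratedFDeriv ℝ 2 PWR φ evaluated at (v, v) strictly negative. (Paper's Corollary 1: PWR_w is a strict saddle function with no spurious local minima.) -/
/-!
Write `z = ∑ r_k e^{iφ_k}`. At a critical point every quadrature component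
`Im (e^{iφ_a} conj z)` vanishes, so each phasor `e^{iφ_a}` is aligned or anti-aligned with `z`,
and the in-phase components `p_a = Re (e^{iφ_a} conj z)` satisfy
`p_j p_k = |z|² cos (φ_j - φ_k)`. The Hessian `-∑ r_j r_k cos (φ_j - φ_k) (v_j - v_k)²` then
satisfies `|z|² H(v) = 2 (∑ w v)² - 2 |z|² ∑ w v²` with `w = r p` and `∑ w = |z|²`.
If two phasors are aligned with `z`, a `v` supported on them with `∑ w v = 0` makes `H(v) < 0`.
Otherwise either `z = 0`, or exactly one phasor `a` is aligned and all others are anti-aligned,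
so that `|z| = r_a - ∑_{b ≠ a} r_b`, which by the triangle inequality is a lower bound for `|z|`
at every choice of phases.
-/

open Real

section SumIdentities

variable {ι : Type*} [Fintype ι]

theorem sum_sum_mul_sub_of_antisymm (a : ι → ι → ℝ) (ha : ∀ j k, a k j = -a j k) (v : ι → ℝ) :
    ∑ j, ∑ k, a j k * (v j - v k) = 2 * ∑ j, v j * ∑ k, a j k := by
  have hswap : ∑ j, ∑ k, a j k * v k = -∑ j, ∑ k, a j k * v j := by
    rw [Finset.sum_comm, ← Finset.sum_neg_distrib]
    exact Finset.sum_congr rfl fun j _ => by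
      rw [← Finset.sum_neg_distrib]; exact Finset.sum_congr rfl fun k _ => by rw [ha]; ring
  calc ∑ j, ∑ k, a j k * (v j - v k) = ∑ j, ∑ k, a j k * v j - ∑ j, ∑ k, a j k * v k := by
        simp only [mul_sub, Finset.sum_sub_distrib]
    _ = 2 * ∑ j, ∑ k, a j k * v j := by rw [hswap]; ring
    _ = 2 * ∑ j, v j * ∑ k, a j k := by simp only [Finset.mul_sum, Finset.sum_mul, mul_comm (v _)]

theorem sum_sum_mul_mul_sub_sq (w v : ι → ℝ) :
    ∑ j, ∑ k, w j * w k * (v j - v k) ^ 2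
      = 2 * (∑ j, w j) * (∑ j, w j * v j ^ 2) - 2 * (∑ j, w j * v j) ^ 2 := by
  have hexpand : ∀ j k, w j * w k * (v j - v k) ^ 2
      = w j * (w k * v k ^ 2) + w j * v j ^ 2 * w k - 2 * (w j * v j * (w k * v k)) :=
    fun j k => by ring
  simp only [hexpand, Finset.sum_sub_distrib, Finset.sum_add_distrib, ← Finset.mul_sum,
    ← Finset.sum_mul]
  ring

theorem norm_sub_sum_erase_le_norm_sum {E : Type*} [SeminormedAddCommGroup E] [DecidableEq ι]
    (f : ι → E) (a : ι) : ‖f a‖ - ∑ i ∈ Finset.univ.erase a, ‖f i‖ ≤ ‖∑ i, f i‖ := by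
  rw [← Finset.add_sum_erase _ _ (Finset.mem_univ a)]
  have := norm_sub_norm_le (f a) (-∑ i ∈ Finset.univ.erase a, f i)
  rw [norm_neg, sub_neg_eq_add] at this
  linarith [norm_sum_le (Finset.univ.erase a) f]

end SumIdentities

section ReceivedPower

variable {ι : Type*}

noncomputable def phaseDiff (j k : ι) : EuclideanSpace ℝ ι →L[ℝ] ℝ :=
  EuclideanSpace.proj j - EuclideanSpace.proj k

@[simp] theorem phaseDiff_apply (j k : ι) (φ : EuclideanSpace ℝ ι) :
    phaseDiff j k φ = φ j - φ k := rfl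

variable [Fintype ι]

noncomputable def receivedPower (r : ι → ℝ) (φ : EuclideanSpace ℝ ι) : ℝ :=
  ∑ j, ∑ k, r j * r k * cos (φ j - φ k)

noncomputable def receivedPowerDeriv (r : ι → ℝ) (φ : EuclideanSpace ℝ ι) :
    EuclideanSpace ℝ ι →L[ℝ] ℝ :=
  ∑ j, ∑ k, (r j * r k * -sin (φ j - φ k)) • phaseDiff j k

noncomputable def receivedPowerHessian (r : ι → ℝ) (φ : EuclideanSpace ℝ ι) :
    EuclideanSpace ℝ ι →L[ℝ] EuclideanSpace ℝ ι →L[ℝ] ℝ :=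
  ∑ j, ∑ k, ((r j * r k * -cos (φ j - φ k)) • phaseDiff j k).smulRight (phaseDiff j k)

theorem hasFDerivAt_receivedPower (r : ι → ℝ) (φ : EuclideanSpace ℝ ι) :
    HasFDerivAt (receivedPower r) (receivedPowerDeriv r φ) φ := by
  refine HasFDerivAt.fun_sum fun j _ => HasFDerivAt.fun_sum fun k _ => ?_
  have := ((phaseDiff j k).hasFDerivAt (x := φ)).cos.const_mul (r j * r k)
  simpa only [phaseDiff_apply, smul_smul] using this

theorem hasFDerivAt_receivedPowerDeriv (r : ι → ℝ) (φ : EuclideanSpace ℝ ι) :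
    HasFDerivAt (receivedPowerDeriv r) (receivedPowerHessian r φ) φ := by
  refine HasFDerivAt.fun_sum fun j _ => HasFDerivAt.fun_sum fun k _ => ?_
  have := ((((phaseDiff j k).hasFDerivAt (x := φ)).sin.neg).const_mul (r j * r k)).smul_const
    (phaseDiff j k)
  simpa only [phaseDiff_apply, Pi.neg_apply, smul_neg, smul_smul, ← neg_smul, ← mul_neg] using this

theorem fderiv_receivedPower (r : ι → ℝ) : fderiv ℝ (receivedPower r) = receivedPowerDeriv r :=
  funext fun φ => (hasFDerivAt_receivedPower r φ).fderiv

theorem iteratedFDeriv_two_receivedPower_apply (r : ι → ℝ) (φ v : EuclideanSpace ℝ ι) :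
    iteratedFDeriv ℝ 2 (receivedPower r) φ ![v, v]
      = -∑ j, ∑ k, r j * r k * cos (φ j - φ k) * (v j - v k) ^ 2 := by
  rw [iteratedFDeriv_two_apply, fderiv_receivedPower, (hasFDerivAt_receivedPowerDeriv r φ).fderiv]
  simp only [receivedPowerHessian, FunLike.coe_sum, Finset.sum_apply,
    ContinuousLinearMap.smulRight_apply, FunLike.coe_smul, Pi.smul_apply, phaseDiff_apply,
    Matrix.cons_val_zero, Matrix.cons_val_one, smul_eq_mul, ← Finset.sum_neg_distrib]
  exact Finset.sum_congr rfl fun j _ => Finset.sum_congr rfl fun k _ => by ring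

/-- `inPhase r φ a + i • quadrature r φ a = e^{iφ_a} • conj (∑ k, r k • e^{iφ_k})`. -/
noncomputable def inPhase (r : ι → ℝ) (φ : EuclideanSpace ℝ ι) (a : ι) : ℝ :=
  ∑ k, r k * cos (φ a - φ k)

noncomputable def quadrature (r : ι → ℝ) (φ : EuclideanSpace ℝ ι) (a : ι) : ℝ :=
  ∑ k, r k * sin (φ a - φ k)

theorem sum_mul_inPhase (r : ι → ℝ) (φ : EuclideanSpace ℝ ι) :
    ∑ a, r a * inPhase r φ a = receivedPower r φ := by
  simp only [inPhase, receivedPower, Finset.mul_sum, mul_assoc]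

theorem inPhase_eq (r : ι → ℝ) (φ : EuclideanSpace ℝ ι) (a : ι) :
    inPhase r φ a
      = cos (φ a) * ∑ k, r k * cos (φ k) + sin (φ a) * ∑ k, r k * sin (φ k) := by
  simp only [inPhase, cos_sub, Finset.mul_sum, ← Finset.sum_add_distrib]
  exact Finset.sum_congr rfl fun k _ => by ring

theorem quadrature_eq (r : ι → ℝ) (φ : EuclideanSpace ℝ ι) (a : ι) :
    quadrature r φ a
      = sin (φ a) * ∑ k, r k * cos (φ k) - cos (φ a) * ∑ k, r k * sin (φ k) := by
  simp only [quadrature, sin_sub, Finset.mul_sum, ← Finset.sum_sub_distrib]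
  exact Finset.sum_congr rfl fun k _ => by ring

theorem receivedPower_eq_sq_add_sq (r : ι → ℝ) (φ : EuclideanSpace ℝ ι) :
    receivedPower r φ = (∑ k, r k * cos (φ k)) ^ 2 + (∑ k, r k * sin (φ k)) ^ 2 := by
  simp only [← sum_mul_inPhase, inPhase_eq, mul_add, Finset.sum_add_distrib, ← mul_assoc,
    ← Finset.sum_mul]
  ring

theorem receivedPower_eq_norm_sq (r : ι → ℝ) (φ : EuclideanSpace ℝ ι) :
    receivedPower r φ = ‖∑ i, (r i : ℂ) * Complex.exp (φ i * Complex.I)‖ ^ 2 := by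
  rw [receivedPower_eq_sq_add_sq, Complex.sq_norm, Complex.normSq_apply, Complex.re_sum,
    Complex.im_sum]
  simp only [Complex.re_ofReal_mul, Complex.im_ofReal_mul, Complex.exp_ofReal_mul_I_re,
    Complex.exp_ofReal_mul_I_im]
  ring

theorem inPhase_mul_add_quadrature_mul (r : ι → ℝ) (φ : EuclideanSpace ℝ ι) (j k : ι) :
    inPhase r φ j * inPhase r φ k + quadrature r φ j * quadrature r φ k
      = receivedPower r φ * cos (φ j - φ k) := by
  rw [inPhase_eq, inPhase_eq, quadrature_eq, quadrature_eq, receivedPower_eq_sq_add_sq, cos_sub]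
  ring

theorem receivedPowerDeriv_apply (r : ι → ℝ) (φ v : EuclideanSpace ℝ ι) :
    receivedPowerDeriv r φ v = -2 * ∑ j, v j * (r j * quadrature r φ j) := by
  simp only [receivedPowerDeriv, FunLike.coe_sum, Finset.sum_apply, FunLike.coe_smul,
    Pi.smul_apply, phaseDiff_apply, smul_eq_mul]
  rw [sum_sum_mul_sub_of_antisymm _ fun j k => by rw [← neg_sub, sin_neg]; ring]
  simp only [quadrature, Finset.mul_sum]
  exact Finset.sum_congr rfl fun j _ => Finset.sum_congr rfl fun k _ => by ring

theorem quadrature_eq_zero_of_fderiv_eq_zero [DecidableEq ι] {r : ι → ℝ}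
    {φ : EuclideanSpace ℝ ι} (h : fderiv ℝ (receivedPower r) φ = 0) {a : ι} (ha : r a ≠ 0) :
    quadrature r φ a = 0 := by
  have := congr($h (EuclideanSpace.single a 1))
  rw [fderiv_receivedPower, receivedPowerDeriv_apply] at this
  simpa [PiLp.single_apply, ha] using this

end ReceivedPower

section CriticalPoint

variable {ι : Type*} [Fintype ι] {r : ι → ℝ} {φ : EuclideanSpace ℝ ι}

theorem inPhase_mul_inPhase_of_quadrature_eq_zero (hq : ∀ a, quadrature r φ a = 0) (j k : ι) :
    inPhase r φ j * inPhase r φ k = receivedPower r φ * cos (φ j - φ k) := by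
  simpa [hq] using inPhase_mul_add_quadrature_mul r φ j k

theorem inPhase_sq_of_quadrature_eq_zero (hq : ∀ a, quadrature r φ a = 0) (a : ι) :
    inPhase r φ a ^ 2 = receivedPower r φ := by
  simpa [sq] using inPhase_mul_inPhase_of_quadrature_eq_zero hq a a

theorem receivedPower_mul_iteratedFDeriv_two (hq : ∀ a, quadrature r φ a = 0)
    (v : EuclideanSpace ℝ ι) :
    receivedPower r φ * iteratedFDeriv ℝ 2 (receivedPower r) φ ![v, v]
      = 2 * (∑ j, r j * inPhase r φ j * v j) ^ 2
        - 2 * receivedPower r φ * ∑ j, r j * inPhase r φ j * v j ^ 2 := by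
  calc receivedPower r φ * iteratedFDeriv ℝ 2 (receivedPower r) φ ![v, v]
      = -∑ j, ∑ k, r j * inPhase r φ j * (r k * inPhase r φ k) * (v j - v k) ^ 2 := by
        rw [iteratedFDeriv_two_receivedPower_apply, mul_neg, Finset.mul_sum]
        congr 1
        refine Finset.sum_congr rfl fun j _ => ?_
        rw [Finset.mul_sum]
        refine Finset.sum_congr rfl fun k _ => ?_
        rw [mul_mul_mul_comm, inPhase_mul_inPhase_of_quadrature_eq_zero hq]
        ring
    _ = _ := by rw [sum_sum_mul_mul_sub_sq, sum_mul_inPhase]; ring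

theorem exists_iteratedFDeriv_two_neg [DecidableEq ι] (hq : ∀ a, quadrature r φ a = 0)
    {a b : ι} (hab : a ≠ b) (ha : 0 < r a * inPhase r φ a) (hb : 0 < r b * inPhase r φ b) :
    ∃ v, iteratedFDeriv ℝ 2 (receivedPower r) φ ![v, v] < 0 := by
  let v : EuclideanSpace ℝ ι :=
    EuclideanSpace.single a (r b * inPhase r φ b) - EuclideanSpace.single b (r a * inPhase r φ a)
  have hv : ∀ j, v j
      = (if j = a then r b * inPhase r φ b else 0) - if j = b then r a * inPhase r φ a else 0 :=
    fun j => by simp [v, PiLp.single_apply]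
  have hlin : ∑ j, r j * inPhase r φ j * v j = 0 := by
    rw [Fintype.sum_eq_add a b hab fun j hj => by simp [hv, hj.1, hj.2]]
    simp [hv, hab, hab.symm]
    ring
  have hquad : ∑ j, r j * inPhase r φ j * v j ^ 2
      = r a * inPhase r φ a * (r b * inPhase r φ b) ^ 2
        + r b * inPhase r φ b * (r a * inPhase r φ a) ^ 2 := by
    rw [Fintype.sum_eq_add a b hab fun j hj => by simp [hv, hj.1, hj.2]]
    simp [hv, hab, hab.symm]
  have hpos : 0 < receivedPower r φ := by
    rw [← inPhase_sq_of_quadrature_eq_zero hq a]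
    exact sq_pos_of_ne_zero (right_ne_zero_of_mul ha.ne')
  refine ⟨v, neg_of_mul_neg_right ?_ hpos.le⟩
  rw [receivedPower_mul_iteratedFDeriv_two hq, hlin, hquad]
  nlinarith [mul_pos hpos (add_pos (mul_pos ha (pow_pos hb 2)) (mul_pos hb (pow_pos ha 2)))]

theorem receivedPower_le_of_inPhase_nonpos [DecidableEq ι] (hr : ∀ i, 0 ≤ r i)
    (hq : ∀ a, quadrature r φ a = 0) {a : ι} (ha : 0 < inPhase r φ a)
    (hb : ∀ b ≠ a, inPhase r φ b ≤ 0) (ψ : EuclideanSpace ℝ ι) :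
    receivedPower r φ ≤ receivedPower r ψ := by
  have hsq := inPhase_sq_of_quadrature_eq_zero hq
  have hopp : ∀ b ∈ Finset.univ.erase a, inPhase r φ b = -inPhase r φ a := fun b hb' => by
    rcases sq_eq_sq_iff_eq_or_eq_neg.1 ((hsq b).trans (hsq a).symm) with h | h
    · linarith [hb b (Finset.ne_of_mem_erase hb')]
    · exact h
  have hpa : inPhase r φ a = r a - ∑ b ∈ Finset.univ.erase a, r b := by
    have hsum := sum_mul_inPhase r φ
    rw [← Finset.add_sum_erase _ _ (Finset.mem_univ a),
      Finset.sum_congr rfl fun b hb => by rw [hopp b hb], ← hsq a] at hsum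
    refine mul_left_cancel₀ ha.ne' ?_
    rw [← Finset.sum_mul] at hsum
    linear_combination -hsum
  have hnorm : inPhase r φ a ≤ ‖∑ i, (r i : ℂ) * Complex.exp (ψ i * Complex.I)‖ := by
    simpa [norm_mul, Complex.norm_exp_ofReal_mul_I, abs_of_nonneg (hr _), hpa] using
      norm_sub_sum_erase_le_norm_sum (fun i => (r i : ℂ) * Complex.exp (ψ i * Complex.I)) a
  rw [receivedPower_eq_norm_sq r ψ, ← hsq a]
  exact pow_le_pow_left₀ ha.le hnorm 2

theorem receivedPower_eq_zero_of_inPhase_nonpos (hr : ∀ i, 0 ≤ r i)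
    (h : ∀ a, inPhase r φ a ≤ 0) : receivedPower r φ = 0 := by
  refine le_antisymm ?_ (by rw [receivedPower_eq_norm_sq]; positivity)
  rw [← sum_mul_inPhase]
  exact Finset.sum_nonpos fun a _ => mul_nonpos_of_nonneg_of_nonpos (hr a) (h a)

end CriticalPoint

/-- Paper's Corollary 1: `PWR` is a strict saddle function: every critical point either
achieves the global minimum or is a strict saddle point. -/
theorem PWR_strict_saddle_function (N : ℕ) (r : Fin N → ℝ) (hr : ∀ i, 0 < r i)
    (PWR : EuclideanSpace ℝ (Fin N) → ℝ)
    (hPWR : ∀ φ : EuclideanSpace ℝ (Fin N),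
      PWR φ = (‖∑ i, (r i : ℂ) * Complex.exp ((φ i : ℂ) * Complex.I)‖) ^ 2) :
    ∀ φ : EuclideanSpace ℝ (Fin N), fderiv ℝ PWR φ = 0 →
      PWR φ = (⨅ ψ : EuclideanSpace ℝ (Fin N), PWR ψ) ∨
      ∃ v : EuclideanSpace ℝ (Fin N), iteratedFDeriv ℝ 2 PWR φ ![v, v] < 0 := by
  obtain rfl : PWR = receivedPower r :=
    funext fun ψ => (hPWR ψ).trans (receivedPower_eq_norm_sq r ψ).symm
  intro φ hφ
  have hq a := quadrature_eq_zero_of_fderiv_eq_zero hφ (hr a).ne'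
  by_cases hsaddle : ∃ a b, a ≠ b ∧ 0 < inPhase r φ a ∧ 0 < inPhase r φ b
  · obtain ⟨a, b, hab, ha, hb⟩ := hsaddle
    exact Or.inr (exists_iteratedFDeriv_two_neg hq hab (mul_pos (hr a) ha) (mul_pos (hr b) hb))
  have hmin : ∀ ψ, receivedPower r φ ≤ receivedPower r ψ := by
    by_cases hpos : ∃ a, 0 < inPhase r φ a
    · obtain ⟨a, ha⟩ := hpos
      refine receivedPower_le_of_inPhase_nonpos (fun i => (hr i).le) hq ha fun b hba => ?_
      exact not_lt.1 fun hb => hsaddle ⟨a, b, hba.symm, ha, hb⟩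
    · push Not at hpos
      intro ψ
      rw [receivedPower_eq_zero_of_inPhase_nonpos (fun i => (hr i).le) hpos,
        receivedPower_eq_norm_sq]
      positivity
  exact Or.inl (IsLeast.isGLB (s := Set.range (receivedPower r))
    ⟨⟨φ, rfl⟩, Set.forall_mem_range.2 hmin⟩).ciInf_eq.symm
end

section
/- Let (Ω, μ) be a probability space, let (z_i)_{i∈ℕ} be an i.i.d. sequence of integrable complex-valued random variables with 𝔼[|z₀|] > 0, and let h : Ω → ℂ be a random variable with μ(h = 0) = 0. Then μ({ω : ∃ φ : Fin N → ℝ, (∑_{i < N} z_i(ω) · exp(φ_i · I)) + h(ω) = 0}) → 1 as N → ∞; equivalently (by Lemma 2), the probability that min_φ |∑_{i<N} z_i(ω)·exp(φ_i·I)| ≤ |h(ω)| ≤ max_φ |∑_{i<N} z_i(ω)·exp(φ_i·I)| tends to 1. (Paper's Theorem 1: a perfect-covertness solution exists with probability tending to 1 as the number of IRS elements grows; in the paper z_i = g_{s,w,i}·h_{a,s,i} are products of independent complex Gaussians and h = h_{a,w} is complex Gaussian, which satisfy these hypotheses.) -/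
/-! Fix ω and write a_k = ‖z_k ω‖, S_N = ∑_{k<N} a_k. A point c lies in the set of phase sums
∑_{k<N} z_k ω · exp(φ_k I) as soon as the polygon with sides a_0, …, a_{N-1}, ‖c‖ closes, i.e.
‖c‖ ≤ S_N and 2 a_k ≤ ‖c‖ + S_N for k < N: adding one side at a time, the new vertex is found by
intersecting two circles. By the strong law S_N / N → 𝔼‖z_0‖ > 0, so S_N → ∞ and eventually
a_N ≤ S_N; together these force 2 a_k ≤ S_N for all k < N once N is large, so that -h ω is a
phase sum for all large N, for almost every ω. -/

open Complex MeasureTheory ProbabilityTheory Filter Finset Topology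

theorem Complex.exists_norm_ofReal_sub_mul_exp_eq {x r t : ℝ} (hx : 0 ≤ x) (hr : 0 ≤ r)
    (ht : t ∈ Set.Icc |x - r| (x + r)) : ∃ θ : ℝ, ‖(x : ℂ) - r * exp (θ * I)‖ = t := by
  have hcont : Continuous fun θ : ℝ => ‖(x : ℂ) - r * exp (θ * I)‖ := by fun_prop
  have h₀ : ‖(x : ℂ) - r * exp ((0 : ℝ) * I)‖ = |x - r| := by
    simp [← ofReal_sub, norm_real]
  have hπ : ‖(x : ℂ) - r * exp (Real.pi * I)‖ = x + r := by
    rw [exp_pi_mul_I, mul_neg_one, sub_neg_eq_add, ← ofReal_add, norm_real, Real.norm_eq_abs,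
      abs_of_nonneg (by positivity)]
  obtain ⟨θ, -, hθ⟩ := intermediate_value_Icc Real.pi_pos.le hcont.continuousOn (h₀ ▸ hπ ▸ ht)
  exact ⟨θ, hθ⟩

theorem Complex.exists_norm_sub_mul_exp_eq {c a : ℂ} {t : ℝ}
    (ht : t ∈ Set.Icc |‖c‖ - ‖a‖| (‖c‖ + ‖a‖)) : ∃ θ : ℝ, ‖c - a * exp (θ * I)‖ = t := by
  obtain ⟨θ, hθ⟩ := exists_norm_ofReal_sub_mul_exp_eq (norm_nonneg c) (norm_nonneg a) ht
  refine ⟨θ + arg c - arg a, ?_⟩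
  have hsplit : c - a * exp (↑(θ + arg c - arg a) * I)
      = (‖c‖ - ‖a‖ * exp (θ * I)) * exp (arg c * I) := by
    have hrot :
        exp (↑(θ + arg c - arg a) * I) * exp (arg a * I) = exp (θ * I) * exp (arg c * I) := by
      rw [← exp_add, ← exp_add]
      push_cast
      ring_nf
    linear_combination -norm_mul_exp_arg_mul_I c + exp (↑(θ + arg c - arg a) * I) *
      norm_mul_exp_arg_mul_I a - (‖a‖ : ℂ) * hrot
  rw [hsplit, norm_mul, norm_exp_ofReal_mul_I, mul_one, hθ]

def phaseSums (w : ℕ → ℂ) (N : ℕ) : Set ℂ :=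
  Set.range fun φ : Fin N → ℝ => ∑ i : Fin N, w i * exp (φ i * I)

theorem add_mem_phaseSums_succ {w : ℕ → ℂ} {N : ℕ} {x : ℂ} (hx : x ∈ phaseSums w N) (θ : ℝ) :
    x + w N * exp (θ * I) ∈ phaseSums w (N + 1) := by
  obtain ⟨φ, rfl⟩ := hx
  exact ⟨Fin.snoc φ θ, by simp [Fin.sum_univ_castSucc]⟩

theorem mem_phaseSums_of_polygon_inequalities (w : ℕ → ℂ) {N : ℕ} {c : ℂ}
    (hside : ∀ k < N, 2 * ‖w k‖ ≤ ‖c‖ + ∑ i ∈ range N, ‖w i‖)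
    (hsum : ‖c‖ ≤ ∑ i ∈ range N, ‖w i‖) : c ∈ phaseSums w N := by
  induction N generalizing c with
  | zero =>
    rw [range_zero, sum_empty, norm_le_zero_iff] at hsum
    exact ⟨Fin.elim0, by simp [hsum]⟩
  | succ N ih =>
    rw [sum_range_succ] at hside hsum
    set S := ∑ i ∈ range N, ‖w i‖
    have hlast := hside N N.lt_succ_self
    -- place the last side so that the remaining closing side is as long as allowed
    obtain ⟨θ, hθ⟩ := exists_norm_sub_mul_exp_eq (c := c) (a := w N) (t := min (‖c‖ + ‖w N‖) S)
      ⟨le_min (abs_sub_le_iff.2 ⟨by linarith [norm_nonneg (w N)], by linarith [norm_nonneg c]⟩)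
        (abs_sub_le_iff.2 ⟨by linarith, by linarith⟩), min_le_left _ _⟩
    have hrest : c - w N * exp (θ * I) ∈ phaseSums w N := by
      refine ih (fun k hk => ?_) (hθ ▸ min_le_right _ _)
      have hkS : ‖w k‖ ≤ S := single_le_sum (fun i _ => norm_nonneg (w i)) (mem_range.2 hk)
      rw [hθ, ← min_add_add_right]
      exact le_min (by linarith [hside k (Nat.lt_succ_of_lt hk)]) (by linarith)
    simpa using add_mem_phaseSums_succ hrest θ

theorem tendsto_atTop_of_tendsto_div_natCast {s : ℕ → ℝ} {L : ℝ} (hL : 0 < L)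
    (h : Tendsto (fun n => s n / n) atTop (𝓝 L)) : Tendsto s atTop atTop := by
  refine (h.pos_mul_atTop hL tendsto_natCast_atTop_atTop).congr' ?_
  filter_upwards [eventually_ne_atTop 0] with n hn
  exact div_mul_cancel₀ _ (Nat.cast_ne_zero.2 hn)

theorem eventually_lt_two_mul_of_tendsto_div_natCast {s : ℕ → ℝ} {L : ℝ} (hL : 0 < L)
    (h : Tendsto (fun n => s n / n) atTop (𝓝 L)) : ∀ᶠ n in atTop, s (n + 1) < 2 * s n := by
  have hnext : Tendsto (fun n : ℕ => s (n + 1) / (n + 1)) atTop (𝓝 L) := by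
    simpa [Function.comp_def] using h.comp (tendsto_add_atTop_nat 1)
  have htwice : Tendsto (fun n : ℕ => 2 * (s n / n) * (n / (n + 1))) atTop (𝓝 (2 * L * 1)) :=
    (h.const_mul 2).mul (tendsto_natCast_div_add_atTop 1)
  filter_upwards [hnext.eventually_lt htwice (by linarith), eventually_ne_atTop 0]
    with n hn hn0
  rw [show 2 * (s n / n) * (n / (n + 1)) = 2 * s n / (n + 1) by field_simp] at hn
  exact (div_lt_div_iff_of_pos_right (by positivity)).1 hn

theorem eventually_forall_two_mul_le_sum_range {a : ℕ → ℝ} (ha : 0 ≤ a)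
    (hsum : Tendsto (fun N => ∑ k ∈ range N, a k) atTop atTop)
    (hstep : ∀ᶠ N in atTop, a N ≤ ∑ k ∈ range N, a k) :
    ∀ᶠ N in atTop, ∀ k < N, 2 * a k ≤ ∑ i ∈ range N, a i := by
  obtain ⟨N₀, hN₀⟩ := eventually_atTop.1 hstep
  have hmono : Monotone fun N => ∑ i ∈ range N, a i :=
    (sum_mono_set_of_nonneg ha).comp range_mono
  filter_upwards [hsum.eventually_ge_atTop (2 * ∑ i ∈ range N₀, a i)] with N hN k hk
  rcases lt_or_ge k N₀ with hk₀ | hk₀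
  · calc 2 * a k ≤ 2 * ∑ i ∈ range N₀, a i := by
          gcongr; exact single_le_sum (fun i _ => ha i) (mem_range.2 hk₀)
      _ ≤ ∑ i ∈ range N, a i := hN
  · calc 2 * a k ≤ ∑ i ∈ range (k + 1), a i := by rw [sum_range_succ]; linarith [hN₀ k hk₀]
      _ ≤ ∑ i ∈ range N, a i := hmono hk

theorem MeasureTheory.tendsto_measure_of_ae_eventually_mem {Ω : Type*} [MeasurableSpace Ω]
    {μ : Measure Ω} [IsProbabilityMeasure μ] {E : ℕ → Set Ω}
    (h : ∀ᵐ ω ∂μ, ∀ᶠ n in atTop, ω ∈ E n) : Tendsto (fun n => μ (E n)) atTop (𝓝 1) := by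
  have hmono : Monotone fun n => ⋂ k ≥ n, E k :=
    fun m n hmn => Set.biInter_mono (fun k hk => hmn.trans hk) fun _ _ => subset_rfl
  have hfull : μ (⋃ n, ⋂ k ≥ n, E k) = 1 := by
    rw [← measure_univ (μ := μ)]
    refine measure_congr (ae_eq_univ.2 (measure_mono_null (fun ω hω => ?_) (ae_iff.1 h)))
    simpa [eventually_atTop] using hω
  refine tendsto_of_tendsto_of_tendsto_of_le_of_le (hfull ▸ tendsto_measure_iUnion_atTop hmono)
    tendsto_const_nhds (fun n => measure_mono (Set.biInter_subset_of_mem le_rfl))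
    (fun _ => prob_le_one)

theorem perfect_covertness_prob_tendsto_one_general
    {Ω : Type*} [MeasurableSpace Ω] (μ : Measure Ω) [IsProbabilityMeasure μ]
    (z : ℕ → Ω → ℂ) (h : Ω → ℂ)
    (hindep : iIndepFun z μ)
    (hident : ∀ i, IdentDistrib (z i) (z 0) μ μ)
    (hint : Integrable (z 0) μ)
    (hpos : 0 < ∫ ω, ‖z 0 ω‖ ∂μ) :
    Tendsto (fun N : ℕ =>
        μ {ω | ∃ φ : Fin N → ℝ,
            (∑ i : Fin N, z i ω * Complex.exp ((φ i : ℂ) * Complex.I)) + h ω = 0})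
      atTop (nhds 1) := by
  have hslln := strong_law_ae_real (fun i ω => ‖z i ω‖) hint.norm
    (fun i j hij => (hindep.indepFun hij).comp measurable_norm measurable_norm)
    (fun i => (hident i).comp measurable_norm)
  refine tendsto_measure_of_ae_eventually_mem ?_
  filter_upwards [hslln] with ω hω
  have hsum := tendsto_atTop_of_tendsto_div_natCast hpos hω
  have hstep : ∀ᶠ N in atTop, ‖z N ω‖ ≤ ∑ k ∈ range N, ‖z k ω‖ := by
    filter_upwards [eventually_lt_two_mul_of_tendsto_div_natCast hpos hω] with N hN
    rw [sum_range_succ] at hN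
    linarith
  filter_upwards [eventually_forall_two_mul_le_sum_range (fun k => norm_nonneg (z k ω)) hsum hstep,
    hsum.eventually_ge_atTop ‖h ω‖] with N hside hnorm
  obtain ⟨φ, hφ⟩ := mem_phaseSums_of_polygon_inequalities (fun k => z k ω) (c := -h ω)
    (fun k hk => (hside k hk).trans (le_add_of_nonneg_left (norm_nonneg _))) (by rwa [norm_neg])
  exact ⟨φ, by simp only at hφ; rw [hφ, neg_add_cancel]⟩

/-- Paper's Theorem 1: for an i.i.d. integrable sequence of channel coefficients with
positive mean modulus and an a.s. nonzero direct channel, the probability that a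
perfect-covertness phase configuration exists tends to 1 as the number of IRS elements
grows. -/
theorem perfect_covertness_prob_tendsto_one
    {Ω : Type*} [MeasurableSpace Ω] (μ : Measure Ω) [IsProbabilityMeasure μ]
    (z : ℕ → Ω → ℂ) (h : Ω → ℂ)
    (hmeas : ∀ i, Measurable (z i))
    (hindep : iIndepFun z μ)
    (hident : ∀ i, IdentDistrib (z i) (z 0) μ μ)
    (hint : Integrable (z 0) μ)
    (hpos : 0 < ∫ ω, ‖z 0 ω‖ ∂μ)
    (hmeash : Measurable h)
    (hnz : μ {ω | h ω = 0} = 0) :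
    Tendsto (fun N : ℕ =>
        μ {ω | ∃ φ : Fin N → ℝ,
            (∑ i : Fin N, z i ω * Complex.exp ((φ i : ℂ) * Complex.I)) + h ω = 0})
      atTop (nhds 1) :=
  perfect_covertness_prob_tendsto_one_general μ z h hindep hident hint hpos
end

section
/- For all real r₁, r₂, r₃ > 0: 2·r₁·r₃ − r₂·(r₁ − r₃) − √(2·r₁·r₂²·r₃ + r₂²·r₃² + r₁²·(r₂² + 4·r₃²)) < 0 if and only if r₃ < r₁ + r₂. (The sign analysis of the smallest Hessian eigenvalue λ₁ at the critical point (φ₁, φ₂, φ₃) = (0, 0, π) of PWR_w for N = 3, from Appendix F.) -/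
open Real

/-!
Write `a = 2 r₁ r₃ - r₂ (r₁ - r₃)` and `s` for the radicand. The identity
`s - a² = 4 r₁ r₂ r₃ (r₁ + r₂ - r₃)` makes `a < √s` equivalent to the triangle inequality
`r₃ < r₁ + r₂` as soon as `a ≥ 0`, and when the triangle inequality fails, `a` is indeed positive.
-/

lemma radicand_sub_sq (r₁ r₂ r₃ : ℝ) :
    (2 * r₁ * r₂ ^ 2 * r₃ + r₂ ^ 2 * r₃ ^ 2 + r₁ ^ 2 * (r₂ ^ 2 + 4 * r₃ ^ 2)) -
        (2 * r₁ * r₃ - r₂ * (r₁ - r₃)) ^ 2 = 4 * r₁ * r₂ * r₃ * (r₁ + r₂ - r₃) := by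
  ring

lemma sq_lt_radicand_iff {r₁ r₂ r₃ : ℝ} (h₁ : 0 < r₁) (h₂ : 0 < r₂) (h₃ : 0 < r₃) :
    (2 * r₁ * r₃ - r₂ * (r₁ - r₃)) ^ 2 <
        2 * r₁ * r₂ ^ 2 * r₃ + r₂ ^ 2 * r₃ ^ 2 + r₁ ^ 2 * (r₂ ^ 2 + 4 * r₃ ^ 2)
      ↔ r₃ < r₁ + r₂ := by
  rw [← sub_pos, radicand_sub_sq, mul_pos_iff_of_pos_left (by positivity), sub_pos]

lemma linear_term_pos_of_add_le {r₁ r₂ r₃ : ℝ} (h₁ : 0 < r₁) (h₂ : 0 < r₂)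
    (h : r₁ + r₂ ≤ r₃) : 0 < 2 * r₁ * r₃ - r₂ * (r₁ - r₃) := by
  nlinarith

/-- Appendix F: the smallest Hessian eigenvalue at the aligned critical point
`(φ₁, φ₂, φ₃) = (0, 0, π)` is negative iff `r₃ < r₁ + r₂`. -/
theorem lambda_min_neg_iff (r₁ r₂ r₃ : ℝ) (h₁ : 0 < r₁) (h₂ : 0 < r₂) (h₃ : 0 < r₃) :
    2 * r₁ * r₃ - r₂ * (r₁ - r₃) -
        Real.sqrt (2 * r₁ * r₂ ^ 2 * r₃ + r₂ ^ 2 * r₃ ^ 2 + r₁ ^ 2 * (r₂ ^ 2 + 4 * r₃ ^ 2)) < 0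
      ↔ r₃ < r₁ + r₂ := by
  rw [sub_neg]
  constructor
  · intro h
    by_contra hle
    have ha := linear_term_pos_of_add_le h₁ h₂ (not_lt.1 hle)
    exact hle ((sq_lt_radicand_iff h₁ h₂ h₃).1 ((Real.lt_sqrt ha.le).1 h))
  · intro h
    exact Real.lt_sqrt_of_sq_lt ((sq_lt_radicand_iff h₁ h₂ h₃).2 h)
end
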